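/- Let G be a compact metrizable topological group acting on itself by left translations. If a Borel probability measure μ on G is coset aperiodic, then μ satisfies the 'no deterministic images' condition: there is no pair of proper closed subsets A, B ⊆ G such that gA = B for every g ∈ supp(μ). -/

import Mathlib

open MeasureTheory Topology Filter Set Pointwise

/-- The (closed) support of a measure: the set of points all of whose open
neighborhoods have positive measure. -/
def msupp {α : Type*} [TopologicalSpace α] [MeasurableSpace α] (μ : Measure α) : Set α :=
  {x | ∀ U : Set α, IsOpen U → x ∈ U → 0 < μ U}

/-- **Lemma.** On a compact metrizable group, if a Borel probability measure `μ` is coset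
aperiodic (its support is not contained in any coset of any proper closed subgroup), then
`μ` satisfies the no-deterministic-images condition for the action of `G` on itself by left
translations: there is no pair of proper (nonempty) closed subsets `A, B ⊆ G` with
`gA = B` for every `g ∈ supp μ`. -/
theorem cosetAperiodic_noDetImages {G : Type*} [Group G] [TopologicalSpace G]
    [IsTopologicalGroup G] [CompactSpace G] [TopologicalSpace.MetrizableSpace G]
    [MeasurableSpace G] [BorelSpace G]
    (μ : Measure G) [IsProbabilityMeasure μ]
    (hca : ¬ ∃ (H : Subgroup G) (g : G), IsClosed (H : Set G) ∧ H ≠ ⊤ ∧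
      msupp μ ⊆ g • (H : Set G)) :
    ¬ ∃ A B : Set G, A.Nonempty ∧ B.Nonempty ∧ IsClosed A ∧ IsClosed B ∧
      A ≠ Set.univ ∧ B ≠ Set.univ ∧ ∀ g ∈ msupp μ, g • A = B := by
  rintro ⟨A, B, hAne, hBne, hA, hB, hAuniv, hBuniv, hAB⟩
  apply hca
  -- the support of μ is nonempty
  have hsupp : (msupp μ).Nonempty := by
    by_contra h
    rw [Set.not_nonempty_iff_eq_empty] at h
    have hx : ∀ x : G, ∃ U : Set G, IsOpen U ∧ x ∈ U ∧ μ U = 0 := by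
      intro x
      by_contra hx
      push_neg at hx
      have hxmem : x ∈ msupp μ := fun U hU hxU => pos_iff_ne_zero.mpr (hx U hU hxU)
      simp [h] at hxmem
    choose U hUopen hxU hU0 using hx
    obtain ⟨t, ht⟩ := isCompact_univ.elim_finite_subcover U hUopen
      (fun x _ => Set.mem_iUnion.mpr ⟨x, hxU x⟩)
    have h0 : μ Set.univ = 0 := by
      refine measure_mono_null ht ?_
      exact (measure_biUnion_null_iff t.countable_toSet).mpr fun x _ => hU0 x
    simp [measure_univ] at h0
  obtain ⟨g₀, hg₀⟩ := hsupp
  -- the stabilizer of A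
  set S : Set G := {h : G | h • A ⊆ A} with hS
  have hSclosed : IsClosed S := by
    have hSeq : S = ⋂ a ∈ A, (fun h : G => h * a) ⁻¹' A := by
      ext h
      simp only [hS, Set.mem_setOf_eq, Set.mem_iInter, Set.mem_preimage]
      constructor
      · intro hh a ha; exact hh ⟨a, ha, rfl⟩
      · rintro hh x ⟨a, ha, rfl⟩; exact hh a ha
    rw [hSeq]
    exact isClosed_biInter fun a _ => hA.preimage (continuous_id.mul continuous_const)
  refine ⟨{ carrier := {h : G | h • A = A},
            one_mem' := by simp,
            mul_mem' := ?_, inv_mem' := ?_ }, g₀, ?_, ?_, ?_⟩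
  · intro a b ha hb
    show (a * b) • A = A
    rw [mul_smul, hb, ha]
  · intro a ha
    show a⁻¹ • A = A
    have ha' : a • A = A := ha
    conv_lhs => rw [← ha']
    exact inv_smul_smul a A
  · -- closedness of the stabilizer
    have heq : {h : G | h • A = A} = S ∩ (fun h : G => h⁻¹) ⁻¹' S := by
      ext h
      constructor
      · intro he
        have he' : h • A = A := he
        have h2 : h⁻¹ • A = A := by nth_rewrite 1 [← he']; exact inv_smul_smul h A
        exact ⟨he'.le, h2.le⟩
      · rintro ⟨h1, h2⟩
        have h1' : h • A ⊆ A := h1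
        have h2' : h⁻¹ • A ⊆ A := h2
        refine subset_antisymm h1' ?_
        intro x hx
        have hx' : h⁻¹ • x ∈ A := h2' (Set.smul_mem_smul_set hx)
        simpa using Set.smul_mem_smul_set (a := h) hx'
    show IsClosed {h : G | h • A = A}
    rw [heq]
    exact hSclosed.inter (hSclosed.preimage continuous_inv)
  · -- properness
    intro htop
    apply hAuniv
    obtain ⟨a, ha⟩ := hAne
    ext x
    simp only [Set.mem_univ, iff_true]
    have hmem : (x * a⁻¹) • A = A := (Subgroup.eq_top_iff' _).mp htop (x * a⁻¹)
    rw [← hmem]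
    refine ⟨a, ha, ?_⟩
    show (x * a⁻¹) • a = x
    rw [smul_eq_mul, inv_mul_cancel_right]
  · -- supp μ ⊆ g₀ • H
    intro g hg
    rw [Set.mem_smul_set_iff_inv_smul_mem]
    show (g₀⁻¹ • g) • A = A
    have h1 : g • A = B := hAB g hg
    have h0 : g₀ • A = B := hAB g₀ hg₀
    rw [smul_eq_mul, mul_smul, h1, ← h0, inv_smul_smul]
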